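/- arXiv:1309.5314 — 3 statements merged into one kernel-verified Lean document; each statement's English description precedes it below -/
import Mathlib

section
/- The map sending a to (1,0) and t to (0,1) extends to a group isomorphism from the presented group BS(1,2) = ⟨a,t | t·a·t⁻¹ = a²⟩ onto the semidirect product ℤ[1/2] ⋊ ℤ. -/
/-- The ring of dyadic rationals `ℤ[1/2]`, as a subring of `ℚ`. -/
def DyadicQ : Subring ℚ := Subring.closure {(2:ℚ)⁻¹}

lemma DyadicQ.two_mem : (2:ℚ) ∈ DyadicQ := by
  have := add_mem (Subring.one_mem DyadicQ) (Subring.one_mem DyadicQ)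
  rw [show (1:ℚ) + 1 = 2 by norm_num] at this
  exact this

lemma DyadicQ.half_mem : (2:ℚ)⁻¹ ∈ DyadicQ := Subring.subset_closure rfl

/-- `2` as a unit of `ℤ[1/2]`. -/
def DyadicQ.two : DyadicQˣ where
  val := ⟨2, DyadicQ.two_mem⟩
  inv := ⟨(2:ℚ)⁻¹, DyadicQ.half_mem⟩
  val_inv := by ext; norm_num
  inv_val := by ext; norm_num

/-- The powers `2^m` for `m : ℤ`, as elements of `ℤ[1/2]`. -/
def pow2 (m : ℤ) : DyadicQ := ((DyadicQ.two ^ m : DyadicQˣ) : DyadicQ)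

lemma pow2_add (m q : ℤ) : pow2 (m + q) = pow2 m * pow2 q := by
  simp [pow2, zpow_add]

lemma pow2_zero : pow2 0 = 1 := by simp [pow2]

/-- The group `H = ℤ[1/2] ⋊ ℤ`, where `ℤ` acts by powers of `2`;
multiplication is `(r,m)·(s,q) = (r + 2^m·s, m+q)`. -/
@[ext] structure Hgrp where
  r : DyadicQ
  m : ℤ

instance : Mul Hgrp := ⟨fun x y => ⟨x.r + pow2 x.m * y.r, x.m + y.m⟩⟩
instance : One Hgrp := ⟨⟨0, 0⟩⟩
instance : Inv Hgrp := ⟨fun x => ⟨-(pow2 (-x.m) * x.r), -x.m⟩⟩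

lemma Hgrp.mul_def (x y : Hgrp) : x * y = ⟨x.r + pow2 x.m * y.r, x.m + y.m⟩ := rfl
lemma Hgrp.one_def : (1 : Hgrp) = ⟨0, 0⟩ := rfl
lemma Hgrp.inv_def (x : Hgrp) : x⁻¹ = ⟨-(pow2 (-x.m) * x.r), -x.m⟩ := rfl

instance : Group Hgrp where
  mul_assoc a b c := by
    simp only [Hgrp.mul_def, Hgrp.mk.injEq, pow2_add]
    constructor <;> ring
  one_mul a := by
    obtain ⟨r, m⟩ := a
    simp only [Hgrp.one_def, Hgrp.mul_def, Hgrp.mk.injEq, pow2_zero]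
    constructor <;> ring
  mul_one a := by
    obtain ⟨r, m⟩ := a
    simp only [Hgrp.one_def, Hgrp.mul_def, Hgrp.mk.injEq, pow2_zero]
    constructor <;> ring
  inv_mul_cancel a := by
    simp only [Hgrp.inv_def, Hgrp.mul_def, Hgrp.one_def, Hgrp.mk.injEq]
    constructor <;> ring

/-- Conjugacy in `H`. -/
def conjH (x y : Hgrp) : Prop := ∃ z : Hgrp, z * x * z⁻¹ = y

/-- The element `a = (1,0)` of `H`. -/
def aH : Hgrp := ⟨1, 0⟩
/-- The element `t = (0,1)` of `H`. -/
def tH : Hgrp := ⟨0, 1⟩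
lemma aH_zpow (n : ℤ) : aH ^ n = Hgrp.mk (n : DyadicQ) 0 := by
  induction n using Int.induction_on with
  | zero => simp [Hgrp.one_def]
  | succ k ih =>
      rw [zpow_add_one, ih]
      simp only [aH, Hgrp.mul_def, Hgrp.mk.injEq, pow2_zero]
      push_cast
      constructor <;> first | ring | (ext; push_cast; ring) | simp
  | pred k ih =>
      rw [zpow_sub_one, ih]
      simp only [aH, Hgrp.inv_def, Hgrp.mul_def, Hgrp.mk.injEq, pow2_zero, neg_zero]
      push_cast
      constructor <;> first | ring | (ext; push_cast; ring) | simp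

lemma tH_zpow (n : ℤ) : tH ^ n = Hgrp.mk 0 n := by
  induction n using Int.induction_on with
  | zero => simp [Hgrp.one_def]
  | succ k ih =>
      rw [zpow_add_one, ih]
      simp [tH, Hgrp.mul_def]
  | pred k ih =>
      rw [zpow_sub_one, ih]
      simp only [tH, Hgrp.inv_def, Hgrp.mul_def, Hgrp.mk.injEq]
      constructor <;> ring

lemma aH_zpow_injective : Function.Injective fun n : ℤ => aH ^ n := by
  intro x y h
  simp only [aH_zpow, Hgrp.mk.injEq] at h
  have : ((x : DyadicQ) : ℚ) = ((y : DyadicQ) : ℚ) := by rw [h.1]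
  simpa using this

lemma tH_zpow_injective : Function.Injective fun n : ℤ => tH ^ n := by
  intro x y h
  simp only [tH_zpow, Hgrp.mk.injEq] at h
  exact h.2

/-- The homomorphism `ℤ →* G` given by powers of `g`. -/
def zintHom {G : Type*} [Group G] (g : G) : Multiplicative ℤ →* G where
  toFun n := g ^ (Multiplicative.toAdd n)
  map_one' := by simp
  map_mul' x y := by simp [zpow_add]

/-- For `g` with `n ↦ g ^ n` injective, `⟨g⟩ ≅ ℤ`. -/
noncomputable def zpowMulEquiv {G : Type*} [Group G] (g : G)
    (hg : Function.Injective fun n : ℤ => g ^ n) :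
    Multiplicative ℤ ≃* Subgroup.zpowers g := by
  refine MulEquiv.ofBijective
    ((zintHom g).codRestrict (Subgroup.zpowers g).toSubmonoid
      (fun n => Subgroup.mem_zpowers_iff.mpr ⟨Multiplicative.toAdd n, rfl⟩)) ⟨?_, ?_⟩
  · intro x y h
    have : g ^ (Multiplicative.toAdd x) = g ^ (Multiplicative.toAdd y) :=
      congrArg Subtype.val h
    exact hg this
  · rintro ⟨x, hx⟩
    obtain ⟨n, hn⟩ := Subgroup.mem_zpowers_iff.mp hx
    exact ⟨Multiplicative.ofAdd n, Subtype.ext hn⟩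

/-- The associated isomorphism `⟨a⟩ ≅ ⟨t⟩`, `a ↦ t`, of the HNN extension defining
the Baumslag group. -/
noncomputable def φBS : Subgroup.zpowers aH ≃* Subgroup.zpowers tH :=
  (zpowMulEquiv aH aH_zpow_injective).symm.trans (zpowMulEquiv tH tH_zpow_injective)

/-- The Baumslag group `G(1,2)`, as HNN extension of `H = BS(1,2)` with stable letter `b`,
associated subgroups `⟨a⟩` and `⟨t⟩`, and associated isomorphism `a ↦ t`. -/
noncomputable abbrev BG := HNNExtension Hgrp (Subgroup.zpowers aH) (Subgroup.zpowers tH) φBS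

/-- The embedding of `H` into the Baumslag group. -/
noncomputable def ι : Hgrp →* BG := HNNExtension.of

/-- The stable letter `b` of the Baumslag group. -/
noncomputable def bBG : BG := HNNExtension.t

/-- Conjugacy in the Baumslag group `G(1,2)`. -/
def conjBG (x y : BG) : Prop := ∃ z : BG, z * x * z⁻¹ = y

/-- Generators of the Baumslag–Solitar group `BS(1,2)`. -/
inductive BSGen | a | t

/-- The single relator `t·a·t⁻¹·a⁻²` of `BS(1,2) = ⟨a,t | t·a·t⁻¹ = a²⟩`. -/
def bsRels : Set (FreeGroup BSGen) :=
  {FreeGroup.of BSGen.t * FreeGroup.of BSGen.a * (FreeGroup.of BSGen.t)⁻¹ *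
    (FreeGroup.of BSGen.a * FreeGroup.of BSGen.a)⁻¹}

/-!
The relation holds for `(1,0)` and `(0,1)`, so `a ↦ (1,0)`, `t ↦ (0,1)` defines a homomorphism
`BS(1,2) → ℤ[1/2] ⋊ ℤ`. Conjugating by `t` doubles powers of `a`, and this lets one push every
letter of a word to the normal form `t⁻ᵏ aⁿ tᵏ · tᵐ`, which maps to `(n / 2ᵏ, m)`. Since every
dyadic rational is some `n / 2ᵏ`, the map is onto, and a normal form mapping to `(0,0)` has
`n = m = 0`, so the kernel is trivial.
-/

lemma coe_pow2 (m : ℤ) : ((pow2 m : DyadicQ) : ℚ) = 2 ^ m := by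
  have h := Units.val_zpow_eq_zpow_val (Units.map DyadicQ.subtype.toMonoidHom DyadicQ.two) m
  rwa [← map_zpow] at h

lemma DyadicQ.exists_eq_int_div_two_pow {x : ℚ} (hx : x ∈ DyadicQ) :
    ∃ (n : ℤ) (k : ℕ), x = n / 2 ^ k := by
  induction hx using Subring.closure_induction with
  | mem x hx => exact ⟨1, 1, by rw [Set.mem_singleton_iff.mp hx]; norm_num⟩
  | zero => exact ⟨0, 0, by simp⟩
  | one => exact ⟨1, 0, by simp⟩
  | add x y _ _ hx hy =>
    obtain ⟨⟨n, k, rfl⟩, ⟨n', k', rfl⟩⟩ := And.intro hx hy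
    exact ⟨n * 2 ^ k' + n' * 2 ^ k, k + k', by push_cast; field_simp; ring⟩
  | neg x _ hx =>
    obtain ⟨n, k, rfl⟩ := hx
    exact ⟨-n, k, by push_cast; ring⟩
  | mul x y _ _ hx hy =>
    obtain ⟨⟨n, k, rfl⟩, ⟨n', k', rfl⟩⟩ := And.intro hx hy
    exact ⟨n * n', k + k', by push_cast; field_simp; ring⟩

lemma tH_mul_aH_mul_tH_inv : tH * aH * tH⁻¹ = aH * aH := by
  simp only [tH, aH, Hgrp.mul_def, Hgrp.inv_def, Hgrp.mk.injEq]
  refine ⟨Subtype.ext ?_, by ring⟩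
  push_cast [coe_pow2]
  norm_num

lemma pow_mul_zpow_mul_pow_inv_of_conj_eq_zpow {G : Type*} [Group G] {x y : G} {d : ℤ}
    (h : y * x * y⁻¹ = x ^ d) (k : ℕ) (n : ℤ) : y ^ k * x ^ n * (y ^ k)⁻¹ = x ^ (d ^ k * n) := by
  induction k generalizing n with
  | zero => simp
  | succ k ih =>
    calc y ^ (k + 1) * x ^ n * (y ^ (k + 1))⁻¹ = y * (y ^ k * x ^ n * (y ^ k)⁻¹) * y⁻¹ := by
          group
      _ = x ^ (d ^ (k + 1) * n) := by rw [ih, ← conj_zpow, h, ← zpow_mul]; ring_nf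

namespace BS12

abbrev a : PresentedGroup bsRels := .of .a
abbrev t : PresentedGroup bsRels := .of .t

lemma t_mul_a_mul_t_inv : t * a * t⁻¹ = a ^ (2 : ℤ) := by
  rw [zpow_two, ← mul_inv_eq_one]
  exact PresentedGroup.one_of_mem rfl

-- corresponds to `n / 2ᵏ ∈ ℤ[1/2]`
def dyadic (n : ℤ) (k : ℕ) : PresentedGroup bsRels := (t ^ k)⁻¹ * a ^ n * t ^ k

lemma a_zpow_mul_dyadic (j n : ℤ) (k : ℕ) : a ^ j * dyadic n k = dyadic (2 ^ k * j + n) k := by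
  rw [dyadic, dyadic, zpow_add,
    ← pow_mul_zpow_mul_pow_inv_of_conj_eq_zpow t_mul_a_mul_t_inv]
  group

lemma a_mul_dyadic (n : ℤ) (k : ℕ) : a * dyadic n k = dyadic (2 ^ k + n) k := by
  simpa using a_zpow_mul_dyadic 1 n k

lemma a_inv_mul_dyadic (n : ℤ) (k : ℕ) : a⁻¹ * dyadic n k = dyadic (-2 ^ k + n) k := by
  simpa using a_zpow_mul_dyadic (-1) n k

lemma t_mul_dyadic (n : ℤ) (k : ℕ) : t * dyadic n k = dyadic (2 * n) k * t := by
  have h := pow_mul_zpow_mul_pow_inv_of_conj_eq_zpow t_mul_a_mul_t_inv 1 n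
  simp only [pow_one] at h
  rw [dyadic, dyadic, ← h]
  group

lemma t_inv_mul_dyadic (n : ℤ) (k : ℕ) : t⁻¹ * dyadic n k = dyadic n (k + 1) * t⁻¹ := by
  rw [dyadic, dyadic]
  group

lemma exists_eq_dyadic_mul_t_zpow (g : PresentedGroup bsRels) :
    ∃ (n : ℤ) (k : ℕ) (m : ℤ), g = dyadic n k * t ^ m := by
  have hg : g ∈ Subgroup.closure (Set.range PresentedGroup.of) := by simp
  induction hg using Subgroup.closure_induction_left with
  | one => exact ⟨0, 0, 0, by simp [dyadic]⟩
  | mul_left x hx y _ ih =>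
    obtain ⟨n, k, m, rfl⟩ := ih
    obtain ⟨_ | _, rfl⟩ := hx
    · exact ⟨_, k, m, by rw [← mul_assoc, a_mul_dyadic]⟩
    · exact ⟨_, k, 1 + m, by rw [← mul_assoc, t_mul_dyadic, zpow_add, zpow_one, mul_assoc]⟩
  | inv_mul_cancel x hx y _ ih =>
    obtain ⟨n, k, m, rfl⟩ := ih
    obtain ⟨_ | _, rfl⟩ := hx
    · exact ⟨_, k, m, by rw [← mul_assoc, a_inv_mul_dyadic]⟩
    · exact ⟨n, k + 1, -1 + m, by
        rw [← mul_assoc, t_inv_mul_dyadic, zpow_add, zpow_neg_one, mul_assoc]⟩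

def genToHgrp : BSGen → Hgrp
  | .a => aH
  | .t => tH

lemma lift_genToHgrp_eq_one : ∀ r ∈ bsRels, FreeGroup.lift genToHgrp r = 1 := by
  rintro r rfl
  simp only [map_mul, map_inv, FreeGroup.lift_apply_of, genToHgrp, tH_mul_aH_mul_tH_inv,
    mul_inv_cancel]

noncomputable def toHgrp : PresentedGroup bsRels →* Hgrp :=
  PresentedGroup.toGroup lift_genToHgrp_eq_one

lemma toHgrp_a : toHgrp a = aH := PresentedGroup.toGroup.of lift_genToHgrp_eq_one

lemma toHgrp_t : toHgrp t = tH := PresentedGroup.toGroup.of lift_genToHgrp_eq_one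

lemma toHgrp_dyadic_mul_t_zpow (n : ℤ) (k : ℕ) (m : ℤ) :
    toHgrp (dyadic n k * t ^ m) = ⟨pow2 (-k) * n, m⟩ := by
  rw [dyadic, ← zpow_natCast]
  simp only [map_mul, map_inv, map_zpow, toHgrp_a, toHgrp_t, aH_zpow, tH_zpow, Hgrp.mul_def,
    Hgrp.inv_def, Hgrp.mk.injEq]
  constructor <;> simp

lemma toHgrp_injective : Function.Injective toHgrp := by
  refine (injective_iff_map_eq_one toHgrp).mpr fun g hg => ?_
  obtain ⟨n, k, m, rfl⟩ := exists_eq_dyadic_mul_t_zpow g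
  rw [toHgrp_dyadic_mul_t_zpow, Hgrp.one_def, Hgrp.mk.injEq] at hg
  obtain ⟨hn, rfl⟩ := hg
  obtain rfl : n = 0 := Int.cast_eq_zero.mp ((DyadicQ.two ^ (-k : ℤ)).mul_right_eq_zero.mp hn)
  simp [dyadic]

lemma toHgrp_surjective : Function.Surjective toHgrp := by
  rintro ⟨⟨r, hr⟩, m⟩
  obtain ⟨n, k, rfl⟩ := DyadicQ.exists_eq_int_div_two_pow hr
  refine ⟨dyadic n k * t ^ m, ?_⟩
  rw [toHgrp_dyadic_mul_t_zpow]
  congr 1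
  ext
  push_cast [coe_pow2, zpow_neg, zpow_natCast]
  ring

end BS12

/-- The map `a ↦ (1,0)`, `t ↦ (0,1)` extends to a group isomorphism from the presented
group `BS(1,2) = ⟨a,t | t·a·t⁻¹ = a²⟩` onto `ℤ[1/2] ⋊ ℤ`. -/
theorem stmt0 : ∃ e : PresentedGroup bsRels ≃* Hgrp,
    e (PresentedGroup.of BSGen.a) = aH ∧ e (PresentedGroup.of BSGen.t) = tH :=
  ⟨MulEquiv.ofBijective BS12.toHgrp ⟨BS12.toHgrp_injective, BS12.toHgrp_surjective⟩,
    BS12.toHgrp_a, BS12.toHgrp_t⟩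
end

section
/- Suppose A ≠ H and B ≠ H. Then for every word γ ∈ Σ* and every β ∈ {b, b⁻¹}: ∑_{y ∈ Σ*, η(β·γ·y·β⁻¹) ∉ H} 2·|Δ|^{−|y|−1} ≥ 2/|Δ|², where |y| denotes the length of y. (The weights y ↦ 2·|Δ|^{−|y|−1} form a probability distribution on Σ*.) -/
open scoped ENNReal

/-- The alphabet `Δ = Σ ⊔ {b, b⁻¹}`: `Sum.inl s` for a letter `s ∈ Σ`, and
`Sum.inr true = b`, `Sum.inr false = b⁻¹`. -/
abbrev HNNAlph {H : Type*} (S : Finset H) := {x // x ∈ S} ⊕ Bool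

/-- Evaluation of a single letter of `Δ` in the HNN extension. -/
def hnnLetter {H : Type*} [Group H] {A B : Subgroup H} (φ : A ≃* B) {S : Finset H} :
    HNNAlph S → HNNExtension H A B φ
  | Sum.inl s => HNNExtension.of s.val
  | Sum.inr true => HNNExtension.t
  | Sum.inr false => HNNExtension.t⁻¹

/-- The evaluation homomorphism `η : Δ* → G` (on words, as lists of letters). -/
def hnnEval {H : Type*} [Group H] {A B : Subgroup H} (φ : A ≃* B) {S : Finset H}
    (w : List (HNNAlph S)) : HNNExtension H A B φ :=
  (w.map (hnnLetter φ)).prod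

/-- The image of the base group `H` inside the HNN extension. -/
def hnnBase {H : Type*} [Group H] {A B : Subgroup H} (φ : A ≃* B) :
    Subgroup (HNNExtension H A B φ) :=
  MonoidHom.range HNNExtension.of

/-! Conjugating `g ∈ H` by the stable letter `t^u` leaves `H` as soon as `g` lies outside the
associated subgroup `toSubgroup A B u` (Britton's lemma applied to the reduced word
`t^u g t^-u`). Since `Σ` generates `H` and that subgroup is proper, some `y ∈ Σ*` of length at
most one pushes `γ y` outside it, and the single term of `y` already carries weight
`2 / |Δ|^(|y|+1) ≥ 2 / |Δ|^2`. -/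

namespace HNNExtension

theorem t_zpow_mul_of_mul_t_zpow_neg_notMem_range {H : Type*} [Group H] {A B : Subgroup H}
    (φ : A ≃* B) (u : ℤˣ) {g : H} (hg : g ∉ toSubgroup A B u) :
    (t ^ (u : ℤ) * of g * t ^ (-(u : ℤ)) : HNNExtension H A B φ) ∉ (of.range : Subgroup _) := by
  intro hmem
  let w : NormalWord.ReducedWord H A B :=
    ⟨1, [(u, g), (-u, 1)], List.isChain_pair.2 fun hgu => absurd hgu hg⟩
  have hprod : w.prod φ = t ^ (u : ℤ) * of g * t ^ (-(u : ℤ)) := by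
    simp [NormalWord.ReducedWord.prod, w, mul_assoc]
  simpa [w] using ReducedWord.toList_eq_nil_of_mem_of_range φ w (hprod ▸ hmem)

theorem toSubgroup_ne_top {H : Type*} [Group H] {A B : Subgroup H} (hA : A ≠ ⊤) (hB : B ≠ ⊤)
    (u : ℤˣ) : toSubgroup A B u ≠ ⊤ := by
  rcases Int.units_eq_one_or u with rfl | rfl
  exacts [hA, hB]

end HNNExtension

theorem Subgroup.exists_mem_notMem_of_closure_eq_top {G : Type*} [Group G] {S : Set G}
    (hS : Subgroup.closure S = ⊤) {K : Subgroup G} (hK : K ≠ ⊤) : ∃ s ∈ S, s ∉ K := by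
  by_contra! h
  exact hK (top_le_iff.1 (hS ▸ (Subgroup.closure_le K).2 h))

theorem Subgroup.exists_list_length_le_one_mul_prod_notMem {G : Type*} [Group G] {S : Finset G}
    (hS : Subgroup.closure (S : Set G) = ⊤) {K : Subgroup G} (hK : K ≠ ⊤) (g : G) :
    ∃ y : List {x // x ∈ S}, y.length ≤ 1 ∧ g * (y.map Subtype.val).prod ∉ K := by
  by_cases hg : g ∈ K
  · obtain ⟨s, hs, hsK⟩ := exists_mem_notMem_of_closure_eq_top hS hK
    refine ⟨[⟨s, hs⟩], le_rfl, fun hgs => hsK ((K.mul_mem_cancel_left hg).1 ?_)⟩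
    simpa using hgs
  · exact ⟨[], by simp, by simpa using hg⟩

theorem stmt13_general {H : Type*} [Group H] (S : Finset H)
    (hgen : Subgroup.closure (S : Set H) = ⊤)
    (A B : Subgroup H) (φ : A ≃* B) (hA : A ≠ ⊤) (hB : B ≠ ⊤)
    (γ : List {x // x ∈ S}) (β : HNNExtension H A B φ)
    (hβ : β = HNNExtension.t ∨ β = HNNExtension.t⁻¹) :
    2 / (S.card + 2 : ℝ≥0∞) ^ 2 ≤
      ∑' y : {y : List {x // x ∈ S} //
          β * HNNExtension.of ((γ.map Subtype.val).prod * (y.map Subtype.val).prod) * β⁻¹ ∉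
            hnnBase φ},
        2 / (S.card + 2 : ℝ≥0∞) ^ (y.val.length + 1) := by
  obtain ⟨u, rfl⟩ : ∃ u : ℤˣ, β = HNNExtension.t ^ (u : ℤ) := by
    rcases hβ with rfl | rfl
    exacts [⟨1, by simp⟩, ⟨-1, by simp⟩]
  obtain ⟨y, hy_len, hy⟩ := Subgroup.exists_list_length_le_one_mul_prod_notMem hgen
    (HNNExtension.toSubgroup_ne_top hA hB u) (γ.map Subtype.val).prod
  have hy_out := HNNExtension.t_zpow_mul_of_mul_t_zpow_neg_notMem_range φ u hy
  rw [← zpow_neg]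
  calc 2 / (S.card + 2 : ℝ≥0∞) ^ 2
      ≤ 2 / (S.card + 2 : ℝ≥0∞) ^ (y.length + 1) := by
        gcongr
        · exact le_add_self.trans' one_le_two
        · omega
    _ ≤ _ := by apply ENNReal.le_tsum (⟨y, hy_out⟩ : Subtype _)

/-- If `A ≠ H ≠ B`, then for every `γ ∈ Σ*` and `β ∈ {b, b⁻¹}`, a random word `y ∈ Σ*`
(with weights `2·|Δ|^{-|y|-1}`) satisfies `η(β·γ·y·β⁻¹) ∉ H` with probability at least
`2/|Δ|²`. -/
theorem stmt13 {H : Type*} [Group H] (S : Finset H)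
    (hsym : ∀ x ∈ S, x⁻¹ ∈ S) (hgen : Subgroup.closure (S : Set H) = ⊤)
    (A B : Subgroup H) (φ : A ≃* B) (hA : A ≠ ⊤) (hB : B ≠ ⊤)
    (γ : List {x // x ∈ S}) (β : HNNExtension H A B φ)
    (hβ : β = HNNExtension.t ∨ β = HNNExtension.t⁻¹) :
    2 / (S.card + 2 : ℝ≥0∞) ^ 2 ≤
      ∑' y : {y : List {x // x ∈ S} //
          β * HNNExtension.of ((γ.map Subtype.val).prod * (y.map Subtype.val).prod) * β⁻¹ ∉
            hnnBase φ},
        2 / (S.card + 2 : ℝ≥0∞) ^ (y.val.length + 1) :=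
  stmt13_general S hgen A B φ hA hB γ β hβ
end

section
/- Let d = d₁⋯d_{2n} be a Dyck word of length 2n and let k be the number of indices i with d_i d_{i+1} = ⌊⌉. Let β₁,…,β_{2n} be random elements of {b, b⁻¹} forming a Markov chain with β₁ uniform and transition probabilities Pr[β_{i+1} = β_i] = 2/3, Pr[β_{i+1} = β_i⁻¹] = 1/3. Then the probability of the event that (1) for every index i: d_i d_{i+1} = ⌊⌉ if and only if β_i β_{i+1} = b b⁻¹, and (2) for every matching pair (i,j) of d: β_j = β_i⁻¹, is at most (2/3)^{n−k}·(2/9)^k. -/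
/-- Number of opening brackets (`true` = `⌊`) among positions `l ≤ i < r` of `d`. -/
def cntT (d : ℕ → Bool) (l r : ℕ) : ℕ := ((Finset.Ico l r).filter fun i => d i = true).card

/-- Number of closing brackets (`false` = `⌉`) among positions `l ≤ i < r` of `d`. -/
def cntF (d : ℕ → Bool) (l r : ℕ) : ℕ := ((Finset.Ico l r).filter fun i => d i = false).card

/-- `d_l ⋯ d_{r-1}` is a Dyck word: equally many `⌊` and `⌉`, and every prefix has at
least as many `⌊` as `⌉`. -/
def IsDyckOn (d : ℕ → Bool) (l r : ℕ) : Prop :=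
  cntT d l r = cntF d l r ∧ ∀ m, l ≤ m → m ≤ r → cntF d l m ≤ cntT d l m

/-- `(i,j)` is a matching pair of the Dyck word `d₀ ⋯ d_{N-1}`:
`d_i = ⌊`, `d_j = ⌉` and `d_{i+1} ⋯ d_{j-1}` is a Dyck word. -/
def Matching (d : ℕ → Bool) (N i j : ℕ) : Prop :=
  i < j ∧ j < N ∧ d i = true ∧ d j = false ∧ IsDyckOn d (i + 1) j


/-!
Reveal `β₁, β₂, …` one letter at a time. Given the letters before position `c`, the event
forces `β_c` whenever `d_c = ⌉` (it must be the inverse of the letter at the matching `⌊`) and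
whenever `d_c d_{c+1} = ⌊⌉` (it must be `b`). A forced letter has conditional probability at most
`2/3`, and exactly `1/3` when `d_{c-1} d_c = ⌊⌉`, since then it must differ from `β_{c-1}`.
Multiplying these conditional bounds over the `n - k` other closing brackets, the `k` closing
brackets of factors `⌊⌉` and the `k` opening ones gives `(2/3)^{n-k} (1/3)^k (2/3)^k`.
-/

open Finset Function

section ChainRule

def padFalse {m : ℕ} (β : Fin m → Bool) (i : ℕ) : Bool :=
  if h : i < m then β ⟨i, h⟩ else false

lemma padFalse_of_lt {m i : ℕ} (β : Fin m → Bool) (h : i < m) : padFalse β i = β ⟨i, h⟩ :=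
  dif_pos h

lemma padFalse_snoc {m : ℕ} (β : Fin m → Bool) (v : Bool) :
    padFalse (Fin.snoc β v : Fin (m + 1) → Bool) = update (padFalse β) m v := by
  funext i
  rcases lt_trichotomy i m with h | rfl | h
  · rw [update_of_ne h.ne, padFalse_of_lt _ (by omega), padFalse_of_lt _ h]
    exact Fin.snoc_castSucc (α := fun _ => Bool) (i := ⟨i, h⟩) ..
  · rw [update_self, padFalse_of_lt _ (Nat.lt_succ_self i)]
    exact Fin.snoc_last (α := fun _ => Bool) ..
  · simp [padFalse, update_of_ne h.ne', h.not_gt, (Nat.succ_le_of_lt h).not_gt]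

theorem sum_prod_le_prod_of_step (p : ℕ → (ℕ → Bool) → ℝ) (b : ℕ → ℝ) (hp : ∀ c β, 0 ≤ p c β)
    (hloc : ∀ c i β v, c < i → p c (update β i v) = p c β) :
    ∀ m, (∀ c < m, ∀ β, p c (update β c true) + p c (update β c false) ≤ b c) →
      ∑ β : Fin m → Bool, ∏ c ∈ range m, p c (padFalse β) ≤ ∏ c ∈ range m, b c
  | 0, _ => by simp
  | m + 1, hstep => by
    have ih := sum_prod_le_prod_of_step p b hp hloc m fun c hc => hstep c (by omega)
    have hb : 0 ≤ b m := (add_nonneg (hp _ _) (hp _ _)).trans (hstep m (by omega) fun _ => false)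
    calc ∑ β : Fin (m + 1) → Bool, ∏ c ∈ range (m + 1), p c (padFalse β)
        = ∑ β : Fin m → Bool, (∏ c ∈ range m, p c (padFalse β)) *
            (p m (update (padFalse β) m true) + p m (update (padFalse β) m false)) := by
          rw [← (Fin.snocEquiv fun _ => Bool).sum_comp, Fintype.sum_prod_type, Fintype.sum_bool,
            ← sum_add_distrib]
          refine sum_congr rfl fun β _ => ?_
          have hsnoc : ∀ v, (Fin.snocEquiv fun _ => Bool) (v, β) = Fin.snoc β v := fun _ => rfl
          simp only [hsnoc, padFalse_snoc, prod_range_succ, mul_add]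
          congr 2 <;> exact prod_congr rfl fun c hc => hloc c m _ _ (mem_range.1 hc)
      _ ≤ ∑ β : Fin m → Bool, (∏ c ∈ range m, p c (padFalse β)) * b m :=
          sum_le_sum fun β _ => mul_le_mul_of_nonneg_left (hstep m (by omega) _)
            (prod_nonneg fun c _ => hp c _)
      _ ≤ (∏ c ∈ range m, b c) * b m := by
          rw [← sum_mul]
          exact mul_le_mul_of_nonneg_right ih hb
      _ = ∏ c ∈ range (m + 1), b c := (prod_range_succ b m).symm

lemma tsum_subtype_le_sum {ι : Type*} [Fintype ι] {P : ι → Prop} (f : {x // P x} → ℝ)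
    (g : ι → ℝ) (hg : ∀ x, 0 ≤ g x) (hfg : ∀ x, f x ≤ g x) : ∑' x, f x ≤ ∑ x, g x := by
  classical
  rw [tsum_fintype]
  calc ∑ x, f x ≤ ∑ x : {x // P x}, g x := sum_le_sum fun x _ => hfg x
    _ = ∑ x ∈ univ.filter P, g x := (sum_subtype _ (by simp) g).symm
    _ ≤ ∑ x, g x := sum_le_sum_of_subset_of_nonneg (filter_subset _ _) fun x _ _ => hg x

end ChainRule

section Dyck

variable (d : ℕ → Bool)

lemma card_filter_Ico_add_card_filter_Ico (p : ℕ → Prop) [DecidablePred p] {l m r : ℕ}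
    (hlm : l ≤ m) (hmr : m ≤ r) :
    #{i ∈ Ico l m | p i} + #{i ∈ Ico m r | p i} = #{i ∈ Ico l r | p i} := by
  rw [← Ico_union_Ico_eq_Ico hlm hmr, filter_union,
    card_union_of_disjoint (disjoint_filter_filter (Ico_disjoint_Ico_consecutive l m r))]

def height (m : ℕ) : ℤ := cntT d 0 m - cntF d 0 m

lemma height_sub {l m : ℕ} (hlm : l ≤ m) :
    height d m - height d l = (cntT d l m : ℤ) - cntF d l m := by
  have hT := card_filter_Ico_add_card_filter_Ico (fun i => d i = true) l.zero_le hlm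
  have hF := card_filter_Ico_add_card_filter_Ico (fun i => d i = false) l.zero_le hlm
  simp only [height, cntT, cntF] at *
  omega

lemma height_zero : height d 0 = 0 := by simp [height, cntT, cntF]

lemma height_succ (m : ℕ) : height d (m + 1) = height d m + if d m then 1 else -1 := by
  have h := height_sub d m.le_succ
  cases hm : d m <;> simp [cntT, cntF, filter_singleton, hm] at h ⊢ <;> omega

variable {d}

lemma height_nonneg {N : ℕ} (hd : IsDyckOn d 0 N) {m : ℕ} (hm : m ≤ N) : 0 ≤ height d m := by
  have := hd.2 m m.zero_le hm
  simp only [height]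
  omega

lemma isDyckOn_of_height {l r : ℕ} (hlr : l ≤ r) (heq : height d l = height d r)
    (hmin : ∀ m, l ≤ m → m ≤ r → height d l ≤ height d m) : IsDyckOn d l r := by
  refine ⟨?_, fun m hlm hmr => ?_⟩
  · have := height_sub d hlr
    omega
  · have := height_sub d hlm
    have := hmin m hlm hmr
    omega

lemma matching_succ {N i : ℕ} (hi : i + 1 < N) (hdi : d i = true) (hdi' : d (i + 1) = false) :
    Matching d N i (i + 1) :=
  ⟨i.lt_succ_self, hi, hdi, hdi', ⟨by simp [cntT, cntF], fun m h1 h2 => by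
    rw [show m = i + 1 by omega]; simp [cntT, cntF]⟩⟩

/-- The opener of `⌉` at `c` is the last position `i < c` whose height is below that of `c`. -/
theorem exists_matching_of_eq_false {N c : ℕ} (hd : IsDyckOn d 0 N) (hc : c < N)
    (hdc : d c = false) : ∃ i, Matching d N i c := by
  have hpos : 1 ≤ height d c := by
    have := height_nonneg hd hc
    rw [height_succ, hdc] at this
    simpa using this
  set i := Nat.findGreatest (fun i => height d i < height d c) c
  have hi : height d i < height d c :=
    Nat.findGreatest_spec (P := fun i => height d i < height d c) c.zero_le (by
      rw [height_zero]; omega)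
  have hic : i < c := (Nat.findGreatest_le c).lt_of_ne fun h => (h ▸ hi).false
  have hge : ∀ m, i < m → m ≤ c → height d c ≤ height d m := fun m h1 h2 =>
    not_lt.1 (Nat.findGreatest_is_greatest h1 h2)
  have hi1 := hge (i + 1) i.lt_succ_self hic
  have hdi : d i = true := by
    by_contra h
    rw [height_succ, Bool.eq_false_iff.2 h] at hi1
    simp only [Bool.false_eq_true, if_false] at hi1
    omega
  have heq : height d (i + 1) = height d c := by
    rw [height_succ, hdi] at hi1 ⊢
    simp only [if_true] at hi1 ⊢
    omega
  refine ⟨i, hic, hc, hdi, hdc, isDyckOn_of_height hic heq fun m h1 h2 => ?_⟩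
  rcases h1.eq_or_lt with rfl | h1
  · exact le_rfl
  · exact heq ▸ hge m (by omega) h2

end Dyck

section Markov

/-- The factor of position `c` in the law of the chain: `1/2` for the uniform start, then the
transition probability from `β (c - 1)` to `β c`. -/
noncomputable def markovWeight (c : ℕ) (β : ℕ → Bool) : ℝ :=
  if c = 0 then 2⁻¹ else if β c = β (c - 1) then 2 / 3 else 1 / 3

lemma markovWeight_nonneg (c : ℕ) (β : ℕ → Bool) : 0 ≤ markovWeight c β := by
  unfold markovWeight; split_ifs <;> norm_num

lemma markovWeight_le (c : ℕ) (β : ℕ → Bool) : markovWeight c β ≤ 2 / 3 := by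
  unfold markovWeight; split_ifs <;> norm_num

lemma markovWeight_update_add (c : ℕ) (β : ℕ → Bool) :
    markovWeight c (update β c true) + markovWeight c (update β c false) = 1 := by
  rcases c.eq_zero_or_pos with rfl | hc
  · norm_num [markovWeight]
  · simp only [markovWeight, hc.ne', if_false, update_self, update_of_ne (Nat.sub_lt hc one_pos).ne]
    cases β (c - 1) <;> norm_num

lemma markovWeight_update_not {c : ℕ} (hc : 0 < c) (β : ℕ → Bool) :
    markovWeight c (update β c (!β (c - 1))) = 1 / 3 := by
  simp [markovWeight, hc.ne', update_of_ne (Nat.sub_lt hc one_pos).ne]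

lemma two_inv_mul_prod_le_prod_markovWeight {M : ℕ} (β : Fin M → Bool) :
    2⁻¹ * ∏ i : Fin M, (if h : (i : ℕ) + 1 < M then
        (if β ⟨(i : ℕ) + 1, h⟩ = β i then (2 : ℝ) / 3 else 1 / 3) else 1)
      ≤ ∏ c ∈ range M, markovWeight c (padFalse β) := by
  have hfin : ∏ i : Fin M, (if h : (i : ℕ) + 1 < M then
        (if β ⟨(i : ℕ) + 1, h⟩ = β i then (2 : ℝ) / 3 else 1 / 3) else 1) =
      ∏ i ∈ range M, if i + 1 < M then markovWeight (i + 1) (padFalse β) else 1 := by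
    rw [← Fin.prod_univ_eq_prod_range]
    refine prod_congr rfl fun i _ => ?_
    by_cases h : (i : ℕ) + 1 < M
    · simp [h, markovWeight, padFalse_of_lt _ h, padFalse_of_lt _ i.2]
    · simp [h]
  rw [hfin]
  cases M with
  | zero => norm_num
  | succ m =>
    rw [prod_range_succ, prod_range_succ', if_neg (by omega), mul_one, mul_comm]
    refine le_of_eq (congrArg₂ _ (prod_congr rfl fun i hi => ?_) (by simp [markovWeight]))
    rw [if_pos (by simpa using hi)]

end Markov

section Constraints

/-- The consequences of the event that involve only `β c` and earlier letters. -/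
def ConstraintAt (d : ℕ → Bool) (N c : ℕ) (β : ℕ → Bool) : Prop :=
  (∀ i, Matching d N i c → β c = !β i) ∧
    (c + 1 < N → d c = true → d (c + 1) = false → β c = true)

open Classical in
noncomputable def constrainedWeight (d : ℕ → Bool) (N c : ℕ) (β : ℕ → Bool) : ℝ :=
  if ConstraintAt d N c β then markovWeight c β else 0

variable {d : ℕ → Bool} {N : ℕ}

lemma constrainedWeight_nonneg (c : ℕ) (β : ℕ → Bool) : 0 ≤ constrainedWeight d N c β := by
  unfold constrainedWeight
  split_ifs
  exacts [markovWeight_nonneg c β, le_rfl]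

lemma constrainedWeight_le_markovWeight (c : ℕ) (β : ℕ → Bool) :
    constrainedWeight d N c β ≤ markovWeight c β := by
  unfold constrainedWeight
  split_ifs
  exacts [le_rfl, markovWeight_nonneg c β]

open Classical in
lemma constrainedWeight_update_of_lt {c i : ℕ} (hci : c < i) (β : ℕ → Bool) (v : Bool) :
    constrainedWeight d N c (update β i v) = constrainedWeight d N c β := by
  have hβ : ∀ j ≤ c, update β i v j = β j := fun j hj => update_of_ne (by omega) _ _
  have hcon : ConstraintAt d N c (update β i v) ↔ ConstraintAt d N c β := by
    simp only [ConstraintAt, hβ c le_rfl]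
    exact (forall_congr' fun j => imp_congr_right fun hm => by rw [hβ j hm.1.le]).and Iff.rfl
  have hw : markovWeight c (update β i v) = markovWeight c β := by
    simp only [markovWeight, hβ c le_rfl, hβ (c - 1) (Nat.sub_le c 1)]
  unfold constrainedWeight
  rw [hw]
  exact if_congr hcon rfl rfl

lemma eq_not_of_constraintAt_update {i c : ℕ} (hm : Matching d N i c) {β : ℕ → Bool} {v : Bool}
    (h : ConstraintAt d N c (update β c v)) : v = !β i := by
  simpa [update_of_ne hm.1.ne] using h.1 i hm

lemma constrainedWeight_update_add_le_of_forced {c : ℕ} {β : ℕ → Bool} {v₀ : Bool}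
    (h : ∀ v, ConstraintAt d N c (update β c v) → v = v₀) :
    constrainedWeight d N c (update β c true) + constrainedWeight d N c (update β c false) ≤
      markovWeight c (update β c v₀) := by
  have hzero : ∀ v, v ≠ v₀ → constrainedWeight d N c (update β c v) = 0 := fun v hv =>
    if_neg fun hc => hv (h v hc)
  cases v₀
  · rw [hzero true (by decide), zero_add]
    exact constrainedWeight_le_markovWeight c _
  · rw [hzero false (by decide), add_zero]
    exact constrainedWeight_le_markovWeight c _

noncomputable def stepBound (d : ℕ → Bool) (N c : ℕ) : ℝ :=
  if d c = false then (if 0 < c ∧ d (c - 1) = true then 1 / 3 else 2 / 3)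
  else if c + 1 < N ∧ d (c + 1) = false then 2 / 3 else 1

theorem constrainedWeight_update_add_le_stepBound (hd : IsDyckOn d 0 N) {c : ℕ} (hc : c < N)
    (β : ℕ → Bool) :
    constrainedWeight d N c (update β c true) + constrainedWeight d N c (update β c false) ≤
      stepBound d N c := by
  unfold stepBound
  split_ifs with hclose hprev hopen
  · obtain ⟨i, rfl⟩ : ∃ i, c = i + 1 := ⟨c - 1, by omega⟩
    rw [Nat.add_sub_cancel] at hprev
    have hm := matching_succ hc hprev.2 hclose
    refine (constrainedWeight_update_add_le_of_forced
      fun v => eq_not_of_constraintAt_update hm).trans_eq ?_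
    simpa using markovWeight_update_not (Nat.succ_pos i) β
  · obtain ⟨i, hm⟩ := exists_matching_of_eq_false hd hc hclose
    exact (constrainedWeight_update_add_le_of_forced
      fun v => eq_not_of_constraintAt_update hm).trans (markovWeight_le c _)
  · refine (constrainedWeight_update_add_le_of_forced (v₀ := true) fun v h => ?_).trans
      (markovWeight_le c _)
    simpa using h.2 hopen.1 (by simpa using hclose) hopen.2
  · exact (add_le_add (constrainedWeight_le_markovWeight c _)
      (constrainedWeight_le_markovWeight c _)).trans_eq (markovWeight_update_add c β)

lemma constraintAt_padFalse (β : Fin N → Bool)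
    (hopen : ∀ i : ℕ, (h : i + 1 < N) → d i = true → d (i + 1) = false →
      β ⟨i, Nat.lt_of_succ_lt h⟩ = true)
    (hmatch : ∀ i j : ℕ, (hm : Matching d N i j) →
      β ⟨j, hm.2.1⟩ = ! β ⟨i, lt_trans hm.1 hm.2.1⟩)
    {c : ℕ} (hc : c < N) : ConstraintAt d N c (padFalse β) := by
  refine ⟨fun i hm => ?_, fun h hdc hdc' => ?_⟩
  · rw [padFalse_of_lt β hc, padFalse_of_lt β (hm.1.trans hc)]
    exact hmatch i c hm
  · rw [padFalse_of_lt β hc]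
    exact hopen c h hdc hdc'

end Constraints

section Counting

variable {d : ℕ → Bool} {N : ℕ}

lemma card_filter_eq_false_of_isDyckOn {n : ℕ} (hd : IsDyckOn d 0 (2 * n)) :
    #{c ∈ range (2 * n) | d c = false} = n := by
  have htot : cntT d 0 (2 * n) + cntF d 0 (2 * n) = 2 * n := by
    simp only [cntT, cntF, ← range_eq_Ico, Bool.eq_false_iff]
    rw [card_filter_add_card_filter_not, card_range]
  have := hd.1
  simp only [cntF, ← range_eq_Ico] at this htot ⊢
  omega

lemma card_filter_closing_after_opening :
    #{c ∈ range N | 0 < c ∧ d (c - 1) = true ∧ d c = false} =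
      #{i ∈ range N | i + 1 < N ∧ d i = true ∧ d (i + 1) = false} := by
  refine card_bij' (fun c _ => c - 1) (fun i _ => i + 1) (fun c hc => ?_) (fun i hi => ?_)
    (fun c hc => ?_) (fun i _ => by simp)
  all_goals simp only [mem_filter, mem_range] at *
  · refine ⟨by omega, by omega, hc.2.2.1, ?_⟩
    rw [Nat.sub_add_cancel hc.2.1]; exact hc.2.2.2
  · exact ⟨hi.2.1, by omega, by simpa using hi.2.2.1, hi.2.2.2⟩
  · omega

lemma stepBound_eq (c : ℕ) : stepBound d N c =
    (if d c = false then 2 / 3 else 1) *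
      (if 0 < c ∧ d (c - 1) = true ∧ d c = false then 1 / 2 else 1) *
      (if c + 1 < N ∧ d c = true ∧ d (c + 1) = false then 2 / 3 else 1) := by
  unfold stepBound
  cases d c <;> split_ifs <;> simp_all; norm_num

theorem prod_stepBound {n k : ℕ} (hd : IsDyckOn d 0 (2 * n))
    (hk : k = #{i ∈ range (2 * n) | i + 1 < 2 * n ∧ d i = true ∧ d (i + 1) = false}) :
    ∏ c ∈ range (2 * n), stepBound d (2 * n) c = (2 / 3 : ℝ) ^ (n - k) * (2 / 9 : ℝ) ^ k := by
  have hends := (card_filter_closing_after_opening (d := d) (N := 2 * n)).trans hk.symm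
  have hkn : k ≤ n := by
    have hsub := card_le_card (monotone_filter_right (range (2 * n))
      (p := fun c => 0 < c ∧ d (c - 1) = true ∧ d c = false) fun _ _ hc => hc.2.2)
    rwa [hends, card_filter_eq_false_of_isDyckOn hd] at hsub
  simp only [stepBound_eq, prod_mul_distrib, prod_ite, prod_const,
    card_filter_eq_false_of_isDyckOn hd, hends, ← hk]
  obtain ⟨j, rfl⟩ := Nat.exists_eq_add_of_le hkn
  rw [Nat.add_sub_cancel_left, pow_add, show (2 / 9 : ℝ) = 2 / 3 * (1 / 2) * (2 / 3) by norm_num,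
    mul_pow, mul_pow]
  ring

end Counting

/-- For a Dyck word `d` of length `2n` with `k` factors `⌊⌉`, the probability (under the
Markov chain on `{b, b⁻¹}`, `true` = `b`, with uniform start and staying probability `2/3`)
that (1) `d_i d_{i+1} = ⌊⌉` iff `β_i β_{i+1} = b b⁻¹`, and (2) `β_j = β_i⁻¹` for every
matching pair `(i,j)` of `d`, is at most `(2/3)^{n-k}·(2/9)^k`. -/
theorem stmt17 (n k : ℕ) (d : ℕ → Bool) (hd : IsDyckOn d 0 (2 * n))
    (hk : k = ((Finset.range (2 * n)).filter fun i =>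
        i + 1 < 2 * n ∧ d i = true ∧ d (i + 1) = false).card) :
    ∑' β : {β : Fin (2 * n) → Bool //
        (∀ i : ℕ, (h : i + 1 < 2 * n) →
          ((d i = true ∧ d (i + 1) = false) ↔
            (β ⟨i, Nat.lt_of_succ_lt h⟩ = true ∧ β ⟨i + 1, h⟩ = false))) ∧
        (∀ i j : ℕ, (hm : Matching d (2 * n) i j) →
          β ⟨j, hm.2.1⟩ = ! β ⟨i, lt_trans hm.1 hm.2.1⟩)},
      (2⁻¹ * ∏ i : Fin (2 * n), if h : (i : ℕ) + 1 < 2 * n then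
          (if β.val ⟨(i : ℕ) + 1, h⟩ = β.val i then (2 : ℝ) / 3 else 1 / 3) else 1)
      ≤ (2 / 3 : ℝ) ^ (n - k) * (2 / 9 : ℝ) ^ k := by
  refine (tsum_subtype_le_sum _
    (fun β => ∏ c ∈ range (2 * n), constrainedWeight d (2 * n) c (padFalse β))
    (fun β => prod_nonneg fun c _ => constrainedWeight_nonneg c _) fun β => ?_).trans ?_
  · obtain ⟨β, hiff, hmatch⟩ := β
    have hcon : ∀ c < 2 * n, ConstraintAt d (2 * n) c (padFalse β) := fun c =>
      constraintAt_padFalse β (fun i h hdi hdi' => ((hiff i h).1 ⟨hdi, hdi'⟩).1) hmatch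
    refine (two_inv_mul_prod_le_prod_markovWeight β).trans_eq (prod_congr rfl fun c hc => ?_)
    exact (if_pos (hcon c (mem_range.1 hc))).symm
  · rw [← prod_stepBound hd hk]
    exact sum_prod_le_prod_of_step _ _ constrainedWeight_nonneg
      (fun c i β v hci => constrainedWeight_update_of_lt hci β v) (2 * n)
      fun c hc => constrainedWeight_update_add_le_stepBound hd hc
end
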